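/- arXiv:cond-mat/9211003 — 3 statements merged into one kernel-verified Lean document; each statement's English description precedes it below -/
import Mathlib

section
/- Exactly 20 of the 36 seven-element subsets B of the 3×3 grid Fin 3 × Fin 3 are strongly defective (SD) configurations (this is the coefficient 20 of p⁷q² in the combinatorial polynomial Q₍₂,₃₎(p) = p⁹ + 9p⁸q + 20p⁷q²). -/
/-!
A connected subset of `B` lies in the connected component of `B` through any of its cells, and
meeting every side twice passes to supersets; so `B` is SD iff the component of one of its cells
meets every side twice. Components are computed by flood fill, which stabilises after nine steps,
so being SD is a decidable property of finite sets and the count is a finite check. By hand: a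
seven-element set misses two cells, and it fails to be SD exactly when these lie on a common side
(12 pairs) or are the two neighbours of a corner, cutting it off (4 pairs).
-/

/-- Face-adjacency on the 3×3 grid: agree in one coordinate, differ by exactly 1 in the other. -/
def Adj3 (a b : Fin 3 × Fin 3) : Prop :=
  (a.1 = b.1 ∧ (a.2.val + 1 = b.2.val ∨ b.2.val + 1 = a.2.val)) ∨
  (a.2 = b.2 ∧ (a.1.val + 1 = b.1.val ∨ b.1.val + 1 = a.1.val))

/-- A set of cells is connected under face-adjacency. -/
def Connected3 (C : Set (Fin 3 × Fin 3)) : Prop :=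
  ∀ x ∈ C, ∀ y ∈ C, Relation.ReflTransGen (fun a b => a ∈ C ∧ b ∈ C ∧ Adj3 a b) x y

/-- A set of black cells is a strongly defective (SD) configuration: there is a connected
subset containing at least 2 of the 3 cells of each of the four sides. -/
def SD3 (B : Set (Fin 3 × Fin 3)) : Prop :=
  ∃ C ⊆ B, Connected3 C ∧
    2 ≤ (C ∩ {c | c.1 = 0}).ncard ∧ 2 ≤ (C ∩ {c | c.1 = 2}).ncard ∧
    2 ≤ (C ∩ {c | c.2 = 0}).ncard ∧ 2 ≤ (C ∩ {c | c.2 = 2}).ncard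

open Finset Function Relation

theorem Finset.isFixedPt_iterate_card {α : Type*} [Fintype α] {f : Finset α → Finset α}
    (hf : ∀ t, t ⊆ f t) (t : Finset α) : IsFixedPt f (f^[Fintype.card α] t) := by
  by_cases hfix : ∃ k ≤ Fintype.card α, IsFixedPt f (f^[k] t)
  · obtain ⟨k, hk, hk_fix⟩ := hfix
    rw [← Nat.sub_add_cancel hk, iterate_add_apply, (hk_fix.iterate _).eq]
    exact hk_fix
  push Not at hfix
  have hgrow : ∀ k ≤ Fintype.card α + 1, k ≤ #(f^[k] t) := by
    intro k hk
    induction k with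
    | zero => exact Nat.zero_le _
    | succ k ih =>
      have hlt : f^[k] t ⊂ f^[k + 1] t := by
        rw [iterate_succ_apply']
        exact ssubset_iff_subset_ne.mpr ⟨hf _, Ne.symm (hfix k (by omega))⟩
      exact (ih (by omega)).trans_lt (card_lt_card hlt)
  have := (hgrow _ le_rfl).trans (card_le_univ _)
  omega

section FloodFill

variable {α : Type*} [DecidableEq α] (r : α → α → Prop) [DecidableRel r]

def floodStep (s t : Finset α) : Finset α :=
  t ∪ s.filter fun b => ∃ a ∈ t, r a b

variable {r} {s : Finset α} {x y : α}

theorem subset_floodStep (t : Finset α) : t ⊆ floodStep r s t :=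
  subset_union_left

theorem iterate_floodStep_subset (hx : x ∈ s) (n : ℕ) : (floodStep r s)^[n] {x} ⊆ s := by
  induction n with
  | zero => simpa using hx
  | succ n ih =>
    rw [iterate_succ_apply']
    exact union_subset ih (filter_subset _ _)

theorem reflTransGen_of_mem_iterate_floodStep (hx : x ∈ s) {n : ℕ}
    (hy : y ∈ (floodStep r s)^[n] {x}) :
    ReflTransGen (fun a b => a ∈ (s : Set α) ∧ b ∈ (s : Set α) ∧ r a b) x y := by
  induction n generalizing y with
  | zero =>
    rw [iterate_zero_apply, mem_singleton] at hy
    exact hy ▸ ReflTransGen.refl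
  | succ n ih =>
    rw [iterate_succ_apply', floodStep, mem_union, mem_filter] at hy
    rcases hy with hy | ⟨hys, a, ha, hay⟩
    · exact ih hy
    · exact (ih ha).tail ⟨iterate_floodStep_subset hx n ha, hys, hay⟩

variable (r) [Fintype α]

def floodFill (s : Finset α) (x : α) : Finset α :=
  (floodStep r s)^[Fintype.card α] {x}

variable {r}

theorem isFixedPt_floodFill : IsFixedPt (floodStep r s) (floodFill r s x) :=
  isFixedPt_iterate_card subset_floodStep _

theorem floodFill_subset (hx : x ∈ s) : floodFill r s x ⊆ s :=
  iterate_floodStep_subset hx _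

theorem mem_floodFill_of_reflTransGen
    (h : ReflTransGen (fun a b => a ∈ (s : Set α) ∧ b ∈ (s : Set α) ∧ r a b) x y) :
    y ∈ floodFill r s x := by
  induction h with
  | refl => exact id_le_iterate_of_id_le (fun t => subset_floodStep t) _ _ (mem_singleton_self x)
  | tail _ hbc ih =>
    rw [← isFixedPt_floodFill.eq]
    exact mem_union_right _ (mem_filter.mpr ⟨hbc.2.1, _, ih, hbc.2.2⟩)

theorem mem_floodFill_iff (hx : x ∈ s) :
    y ∈ floodFill r s x ↔
      ReflTransGen (fun a b => a ∈ (s : Set α) ∧ b ∈ (s : Set α) ∧ r a b) x y :=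
  ⟨reflTransGen_of_mem_iterate_floodStep hx, mem_floodFill_of_reflTransGen⟩

theorem subset_floodFill {C : Set α} (hCs : C ⊆ s)
    (hC : ∀ y ∈ C, ReflTransGen (fun a b => a ∈ C ∧ b ∈ C ∧ r a b) x y) :
    C ⊆ floodFill r s x := fun y hy =>
  mem_floodFill_of_reflTransGen <|
    ReflTransGen.mono (fun _ _ ⟨ha, hb, hab⟩ => ⟨hCs ha, hCs hb, hab⟩) _ _ (hC y hy)

theorem reflTransGen_floodFill_of_reflTransGen
    (h : ReflTransGen (fun a b => a ∈ (s : Set α) ∧ b ∈ (s : Set α) ∧ r a b) x y) :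
    ReflTransGen
      (fun a b => a ∈ (floodFill r s x : Set α) ∧ b ∈ (floodFill r s x : Set α) ∧ r a b) x y := by
  induction h with
  | refl => exact ReflTransGen.refl
  | tail hxb hbc ih =>
    exact ih.tail ⟨mem_floodFill_of_reflTransGen hxb,
      mem_floodFill_of_reflTransGen (hxb.tail hbc), hbc.2.2⟩

theorem reflTransGen_floodFill [Std.Symm r] (hx : x ∈ s) {u v : α}
    (hu : u ∈ floodFill r s x) (hv : v ∈ floodFill r s x) :
    ReflTransGen
      (fun a b => a ∈ (floodFill r s x : Set α) ∧ b ∈ (floodFill r s x : Set α) ∧ r a b) u v := by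
  have : Std.Symm fun a b =>
      a ∈ (floodFill r s x : Set α) ∧ b ∈ (floodFill r s x : Set α) ∧ r a b :=
    ⟨fun _ _ ⟨ha, hb, hab⟩ => ⟨hb, ha, symm_of r hab⟩⟩
  have hxu := reflTransGen_floodFill_of_reflTransGen ((mem_floodFill_iff hx).mp hu)
  have hxv := reflTransGen_floodFill_of_reflTransGen ((mem_floodFill_iff hx).mp hv)
  exact (symm_of _ hxu).trans hxv

end FloodFill

theorem Set.ncard_setOf_eq_card_filter {α : Type*} [Fintype α] (P : Set α → Prop)
    (Q : Finset α → Prop) [DecidablePred Q] (h : ∀ s : Finset α, P s ↔ Q s) :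
    {S : Set α | P S}.ncard = #(Finset.univ.filter Q) := by
  have himage : {S : Set α | P S} = (↑) '' (Finset.univ.filter Q : Set (Finset α)) := by
    ext S
    refine ⟨fun hS => ⟨S.toFinite.toFinset, ?_, S.toFinite.coe_toFinset⟩, ?_⟩
    · simpa [← h] using hS
    · rintro ⟨s, hs, rfl⟩
      simpa [h] using hs
  rw [himage, ncard_image_of_injective _ coe_injective, Set.ncard_coe_finset]

theorem Finset.ncard_coe_inter_setOf {α : Type*} (F : Finset α) (p : α → Prop)
    [DecidablePred p] :
    ((F : Set α) ∩ {c | p c}).ncard = #(F.filter p) := by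
  rw [← Set.ncard_coe_finset, coe_filter]
  rfl

instance : DecidableRel Adj3 := fun a b => by unfold Adj3; infer_instance

instance : Std.Symm Adj3 :=
  ⟨fun _ _ h => h.imp (fun ⟨h₁, h₂⟩ => ⟨h₁.symm, h₂.symm⟩) fun ⟨h₁, h₂⟩ => ⟨h₁.symm, h₂.symm⟩⟩

abbrev MeetsEachSideTwice (C : Finset (Fin 3 × Fin 3)) : Prop :=
  2 ≤ #(C.filter (·.1 = 0)) ∧ 2 ≤ #(C.filter (·.1 = 2)) ∧
    2 ≤ #(C.filter (·.2 = 0)) ∧ 2 ≤ #(C.filter (·.2 = 2))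

theorem sd3_coe_iff (B : Finset (Fin 3 × Fin 3)) :
    SD3 B ↔ ∃ x ∈ B, MeetsEachSideTwice (floodFill Adj3 B x) := by
  constructor
  · rintro ⟨C, hCB, hC, h₁, h₂, h₃, h₄⟩
    obtain ⟨x, hxC, -⟩ := Set.nonempty_of_ncard_ne_zero (s := C ∩ {c | c.1 = 0}) (by omega)
    have hCF := subset_floodFill hCB (hC x hxC)
    have hle (p : Fin 3 × Fin 3 → Prop) [DecidablePred p] :
        (C ∩ {c | p c}).ncard ≤ #((floodFill Adj3 B x).filter p) :=
      (Set.ncard_le_ncard (Set.inter_subset_inter_left _ hCF)).trans_eq (ncard_coe_inter_setOf _ _)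
    exact ⟨x, hCB hxC, h₁.trans (hle _), h₂.trans (hle _), h₃.trans (hle _), h₄.trans (hle _)⟩
  · rintro ⟨x, hxB, hside⟩
    refine ⟨floodFill Adj3 B x, coe_subset.mpr (floodFill_subset hxB),
      fun u hu v hv => reflTransGen_floodFill hxB hu hv, ?_⟩
    simpa only [ncard_coe_inter_setOf] using hside

/-- Exactly 20 of the 36 seven-element subsets of the 3×3 grid are SD configurations. -/
theorem twenty_of_thirtysix_seven_element_subsets_are_SD :
    {B : Set (Fin 3 × Fin 3) | B.ncard = 7}.ncard = 36 ∧
    {B : Set (Fin 3 × Fin 3) | B.ncard = 7 ∧ SD3 B}.ncard = 20 := by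
  constructor
  · rw [Set.ncard_setOf_eq_card_filter _ (#· = 7) fun s => by rw [Set.ncard_coe_finset],
      ← powerset_univ, ← powersetCard_eq_filter, card_powersetCard]
    rfl
  · rw [Set.ncard_setOf_eq_card_filter _
      (fun s => #s = 7 ∧ ∃ x ∈ s, MeetsEachSideTwice (floodFill Adj3 s x))
      fun s => by rw [Set.ncard_coe_finset, sd3_coe_iff]]
    decide
end

section
/- Fix ζ > 0; on [0,ζ] define ρ(z) = cosh(ζ/2 − z)/cosh(ζ/2), G(z,u) = sinh(min(z,u))·sinh(ζ − max(z,u))/sinh(ζ), Q(p) = 12p⁹ − 31p⁸ + 20p⁷, and for continuous φ : [0,ζ] → ℝ define F[φ](z) = ρ(z) + (1 − ρ(z))·∫₀^ζ G(z,u)·Q(φ(u)) du. If 0 ≤ φ(u) ≤ 1 for all u ∈ [0,ζ], then ρ(z) ≤ F[φ](z) ≤ 1 for all z ∈ [0,ζ]. -/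
/-!
`G(z, ·)` is the Dirichlet Green's function of `1 - d²/du²` on `[0, ζ]` and `ρ` is the solution of
`ρ'' = ρ` with boundary values `1`; since the constant `1` solves the same equation, `ρ + ∫ G = 1`.
As `Q` maps `[0, 1]` into `[0, 1]` and `G ≥ 0`, the integral in `F[φ](z)` lies between `0` and
`1 - ρ(z)`, so `ρ ≤ F[φ] ≤ ρ + (1 - ρ)² ≤ 1`.
-/

open Real

/-- Stationary no-branching absorption probability of the simplest model. -/
noncomputable def rhoAbs (ζ z : ℝ) : ℝ := Real.cosh (ζ/2 - z) / Real.cosh (ζ/2)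

/-- Stationary first-branching kernel of the simplest model. -/
noncomputable def Gker (ζ z u : ℝ) : ℝ :=
  Real.sinh (min z u) * Real.sinh (ζ - max z u) / Real.sinh ζ

/-- The combinatorial polynomial Q₍₂,₃₎ counting strongly defective configurations. -/
def Qpoly (p : ℝ) : ℝ := 12*p^9 - 31*p^8 + 20*p^7

/-- The renormalization (recoding) operator of the simplest model. -/
noncomputable def Fop (ζ : ℝ) (φ : ℝ → ℝ) (z : ℝ) : ℝ :=
  rhoAbs ζ z + (1 - rhoAbs ζ z) * ∫ u in (0:ℝ)..ζ, Gker ζ z u * Qpoly (φ u)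

section Qpoly

variable {p : ℝ}

lemma Qpoly_eq_mul : Qpoly p = p ^ 7 * ((4 - 3 * p) * (5 - 4 * p)) := by
  unfold Qpoly; ring

lemma Qpoly_nonneg (h0 : 0 ≤ p) (h1 : p ≤ 1) : 0 ≤ Qpoly p := by
  rw [Qpoly_eq_mul]
  exact mul_nonneg (pow_nonneg h0 7) (mul_nonneg (by linarith) (by linarith))

lemma one_sub_Qpoly : 1 - Qpoly p = (1 - p) ^ 2 *
    (1 + 2 * p + 3 * p ^ 2 + 4 * p ^ 3 + 6 * p ^ 5 + 5 * (p ^ 4 - p ^ 7) + 7 * (p ^ 6 - p ^ 7)) := by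
  unfold Qpoly; ring

lemma Qpoly_le_one (h0 : 0 ≤ p) (h1 : p ≤ 1) : Qpoly p ≤ 1 := by
  have h47 : p ^ 7 ≤ p ^ 4 := pow_le_pow_of_le_one h0 h1 (by norm_num)
  have h67 : p ^ 7 ≤ p ^ 6 := pow_le_pow_of_le_one h0 h1 (by norm_num)
  rw [← sub_nonneg, one_sub_Qpoly]
  exact mul_nonneg (sq_nonneg _) (by linarith [pow_nonneg h0 2, pow_nonneg h0 3, pow_nonneg h0 5])

lemma continuous_Qpoly : Continuous Qpoly := by
  unfold Qpoly; fun_prop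

end Qpoly

section rhoAbs

variable {ζ z : ℝ}

lemma rhoAbs_nonneg : 0 ≤ rhoAbs ζ z :=
  div_nonneg (cosh_pos _).le (cosh_pos _).le

lemma rhoAbs_le_one (hz0 : 0 ≤ z) (hzζ : z ≤ ζ) : rhoAbs ζ z ≤ 1 := by
  rw [rhoAbs, div_le_one (cosh_pos _), cosh_le_cosh, abs_le, abs_of_nonneg (by linarith)]
  constructor <;> linarith

lemma sinh_add_sinh_sub_eq_rhoAbs_mul : sinh z + sinh (ζ - z) = rhoAbs ζ z * sinh ζ := by
  have hz : z = ζ / 2 - (ζ / 2 - z) := by ring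
  have hζz : ζ - z = ζ / 2 + (ζ / 2 - z) := by ring
  have hζ : ζ = 2 * (ζ / 2) := by ring
  rw [rhoAbs, hζ, sinh_two_mul, ← hζ, div_mul_eq_mul_div, eq_div_iff (cosh_pos _).ne', hζz]
  nth_rw 1 [hz]
  rw [sinh_sub, sinh_add]
  ring

end rhoAbs

lemma integral_sinh (a b : ℝ) : ∫ x in a..b, sinh x = cosh b - cosh a :=
  intervalIntegral.integral_eq_sub_of_hasDerivAt (fun x _ ↦ hasDerivAt_cosh x)
    (continuous_sinh.intervalIntegrable a b)

section Gker

variable {ζ z u : ℝ}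

lemma Gker_nonneg (hz0 : 0 ≤ z) (hzζ : z ≤ ζ) (hu0 : 0 ≤ u) (huζ : u ≤ ζ) : 0 ≤ Gker ζ z u :=
  div_nonneg (mul_nonneg (sinh_nonneg_iff.2 (le_min hz0 hu0))
    (sinh_nonneg_iff.2 (sub_nonneg.2 (max_le hzζ huζ)))) (sinh_nonneg_iff.2 (hz0.trans hzζ))

lemma continuous_Gker : Continuous (Gker ζ z) := by
  unfold Gker; fun_prop

lemma integral_Gker_left (hz0 : 0 ≤ z) :
    ∫ u in (0:ℝ)..z, Gker ζ z u = (cosh z - 1) * sinh (ζ - z) / sinh ζ := by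
  have : Set.EqOn (Gker ζ z) (fun u ↦ sinh u * (sinh (ζ - z) / sinh ζ)) (Set.uIcc 0 z) := by
    intro u hu
    rw [Set.uIcc_of_le hz0] at hu
    simp only [Gker, min_eq_right hu.2, max_eq_left hu.2]
    ring
  rw [intervalIntegral.integral_congr this, intervalIntegral.integral_mul_const, integral_sinh,
    cosh_zero, mul_div_assoc]

lemma integral_Gker_right (hzζ : z ≤ ζ) :
    ∫ u in z..ζ, Gker ζ z u = (cosh (ζ - z) - 1) * sinh z / sinh ζ := by
  have : Set.EqOn (Gker ζ z) (fun u ↦ sinh (ζ - u) * (sinh z / sinh ζ)) (Set.uIcc z ζ) := by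
    intro u hu
    rw [Set.uIcc_of_le hzζ] at hu
    simp only [Gker, min_eq_left hu.1, max_eq_right hu.1]
    ring
  rw [intervalIntegral.integral_congr this, intervalIntegral.integral_mul_const,
    intervalIntegral.integral_comp_sub_left (fun x ↦ sinh x), sub_self, integral_sinh, cosh_zero,
    mul_div_assoc]

lemma integral_Gker (hζ : 0 < ζ) (hz0 : 0 ≤ z) (hzζ : z ≤ ζ) :
    ∫ u in (0:ℝ)..ζ, Gker ζ z u = 1 - rhoAbs ζ z := by
  have hs : sinh ζ ≠ 0 := (sinh_pos_iff.2 hζ).ne'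
  rw [← intervalIntegral.integral_add_adjacent_intervals (b := z)
      (continuous_Gker.intervalIntegrable _ _) (continuous_Gker.intervalIntegrable _ _),
    integral_Gker_left hz0, integral_Gker_right hzζ, eq_sub_iff_add_eq,
    ← mul_div_cancel_right₀ (rhoAbs ζ z) hs, ← sinh_add_sinh_sub_eq_rhoAbs_mul]
  field_simp
  rw [show sinh ζ = sinh ((ζ - z) + z) by ring_nf, sinh_add]
  ring

lemma integral_Gker_mul_mem_Icc {f : ℝ → ℝ} (hζ : 0 < ζ) (hz0 : 0 ≤ z) (hzζ : z ≤ ζ)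
    (hf : Continuous f) (hf01 : ∀ u ∈ Set.Icc 0 ζ, 0 ≤ f u ∧ f u ≤ 1) :
    0 ≤ ∫ u in (0:ℝ)..ζ, Gker ζ z u * f u ∧ ∫ u in (0:ℝ)..ζ, Gker ζ z u * f u ≤ 1 - rhoAbs ζ z := by
  have hG : ∀ u ∈ Set.Icc 0 ζ, 0 ≤ Gker ζ z u := fun u hu ↦ Gker_nonneg hz0 hzζ hu.1 hu.2
  refine ⟨intervalIntegral.integral_nonneg hζ.le fun u hu ↦ mul_nonneg (hG u hu) (hf01 u hu).1, ?_⟩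
  rw [← integral_Gker hζ hz0 hzζ]
  exact intervalIntegral.integral_mono_on hζ.le ((continuous_Gker.mul hf).intervalIntegrable _ _)
    (continuous_Gker.intervalIntegrable _ _) fun u hu ↦ mul_le_of_le_one_right (hG u hu) (hf01 u hu).2

end Gker

/-- The recoding operator maps [0,1]-valued continuous functions to functions
between ρ and 1 on [0,ζ]. -/
theorem Fop_bounds (ζ : ℝ) (hζ : 0 < ζ) (φ : ℝ → ℝ) (hφ : Continuous φ)
    (hφ01 : ∀ u ∈ Set.Icc (0:ℝ) ζ, 0 ≤ φ u ∧ φ u ≤ 1) :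
    ∀ z ∈ Set.Icc (0:ℝ) ζ, rhoAbs ζ z ≤ Fop ζ φ z ∧ Fop ζ φ z ≤ 1 := by
  rintro z ⟨hz0, hzζ⟩
  have hQ : ∀ u ∈ Set.Icc 0 ζ, 0 ≤ Qpoly (φ u) ∧ Qpoly (φ u) ≤ 1 := fun u hu ↦
    ⟨Qpoly_nonneg (hφ01 u hu).1 (hφ01 u hu).2, Qpoly_le_one (hφ01 u hu).1 (hφ01 u hu).2⟩
  obtain ⟨hI0, hI1⟩ := integral_Gker_mul_mem_Icc hζ hz0 hzζ (f := fun u ↦ Qpoly (φ u))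
    (continuous_Qpoly.comp hφ) hQ
  have hρ0 : 0 ≤ rhoAbs ζ z := rhoAbs_nonneg
  have hρ1 : rhoAbs ζ z ≤ 1 := rhoAbs_le_one hz0 hzζ
  unfold Fop
  constructor
  · nlinarith [mul_nonneg (sub_nonneg.2 hρ1) hI0]
  · nlinarith [mul_le_mul_of_nonneg_left hI1 (sub_nonneg.2 hρ1), mul_nonneg hρ0 (sub_nonneg.2 hρ1)]
end

section
/- Let B₁, B₂ ⊆ Fin 3 × Fin 3 both be strongly defective (SD) configurations, and form the combined black set B ⊆ Fin 6 × Fin 3 consisting of the cells (i,j) with i ≤ 2 and (i,j) ∈ B₁ together with the cells (i+3, j) with (i,j) ∈ B₂. Then there exists a connected subset of B (under face-adjacency in Fin 6 × Fin 3) that contains a cell in the column {(0,j) : j ∈ Fin 3} and a cell in the column {(5,j) : j ∈ Fin 3}. -/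
/-- Face-adjacency on the 6×3 grid. -/
def Adj63 (a b : Fin 6 × Fin 3) : Prop :=
  (a.1 = b.1 ∧ (a.2.val + 1 = b.2.val ∨ b.2.val + 1 = a.2.val)) ∨
  (a.2 = b.2 ∧ (a.1.val + 1 = b.1.val ∨ b.1.val + 1 = a.1.val))

/-- A set of cells of the 6×3 grid is connected under face-adjacency. -/
def Connected63 (C : Set (Fin 6 × Fin 3)) : Prop :=
  ∀ x ∈ C, ∀ y ∈ C, Relation.ReflTransGen (fun a b => a ∈ C ∧ b ∈ C ∧ Adj63 a b) x y

/-- Embedding of the left 3×3 square into the 6×3 rectangle. -/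
def embLeft (p : Fin 3 × Fin 3) : Fin 6 × Fin 3 := (p.1.castLE (by omega), p.2)

/-- Embedding of the right 3×3 square into the 6×3 rectangle. -/
def embRight (p : Fin 3 × Fin 3) : Fin 6 × Fin 3 := (p.1.addNat 3, p.2)

/-!
The left cluster meets the right face of its square in at least two of three rows, and the
right cluster meets the left face of its square in at least two of three rows. Two subsets of a
three-element set of sizes at least two intersect, so some row `j` carries black cells of both
clusters on either side of the common face; these cells are adjacent, which glues the two
clusters into one connected set reaching both outer columns.
-/

open Relation Set

section

variable {α β : Type*}

/-- `Connected3` and `Connected63` unfold to `IsConnectedBy Adj3` and `IsConnectedBy Adj63`. -/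
def IsConnectedBy (r : α → α → Prop) (C : Set α) : Prop :=
  ∀ x ∈ C, ∀ y ∈ C, ReflTransGen (fun a b => a ∈ C ∧ b ∈ C ∧ r a b) x y

theorem IsConnectedBy.image {r : α → α → Prop} {s : β → β → Prop} {C : Set α} {f : α → β}
    (hf : ∀ a b, r a b → s (f a) (f b)) (hC : IsConnectedBy r C) :
    IsConnectedBy s (f '' C) := by
  rintro _ ⟨x, hx, rfl⟩ _ ⟨y, hy, rfl⟩
  refine ReflTransGen.lift f ?_ x y (hC x hx y hy)
  rintro a b ⟨ha, hb, hab⟩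
  exact ⟨mem_image_of_mem f ha, mem_image_of_mem f hb, hf a b hab⟩

theorem IsConnectedBy.union {s : α → α → Prop} [Std.Symm s] {C D : Set α} {x y : α}
    (hC : IsConnectedBy s C) (hD : IsConnectedBy s D) (hx : x ∈ C) (hy : y ∈ D) (hxy : s x y) :
    IsConnectedBy s (C ∪ D) := by
  set t : α → α → Prop := fun a b => a ∈ C ∪ D ∧ b ∈ C ∪ D ∧ s a b
  have : Std.Symm t := ⟨fun _ _ ⟨ha, hb, hab⟩ => ⟨hb, ha, symm hab⟩⟩
  have inC : ∀ a ∈ C, ∀ b ∈ C, ReflTransGen t a b := fun a ha b hb =>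
    ReflTransGen.mono (fun _ _ ⟨hu, hv, huv⟩ => ⟨Or.inl hu, Or.inl hv, huv⟩) _ _ (hC a ha b hb)
  have inD : ∀ a ∈ D, ∀ b ∈ D, ReflTransGen t a b := fun a ha b hb =>
    ReflTransGen.mono (fun _ _ ⟨hu, hv, huv⟩ => ⟨Or.inr hu, Or.inr hv, huv⟩) _ _ (hD a ha b hb)
  have across : ∀ a ∈ C, ∀ b ∈ D, ReflTransGen t a b := fun a ha b hb =>
    ((inC a ha x hx).tail ⟨Or.inl hx, Or.inr hy, hxy⟩).trans (inD y hy b hb)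
  rintro a (ha | ha) b (hb | hb)
  · exact inC a ha b hb
  · exact across a ha b hb
  · exact symm (across b hb a ha)
  · exact inD a ha b hb

theorem exists_mem_mem_of_card_lt_ncard_add_ncard [Finite β] {C D : Set (α × β)} {i i' : α}
    (h : Nat.card β < (C ∩ {c | c.1 = i}).ncard + (D ∩ {c | c.1 = i'}).ncard) :
    ∃ j, (i, j) ∈ C ∧ (i', j) ∈ D := by
  have snd_injOn (i : α) : InjOn Prod.snd {c : α × β | c.1 = i} :=
    fun a ha b hb hab => Prod.ext (ha.trans hb.symm) hab
  rw [← (snd_injOn i).mono inter_subset_right |>.ncard_image,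
    ← (snd_injOn i').mono inter_subset_right |>.ncard_image] at h
  obtain ⟨_, ⟨⟨_, _⟩, ⟨hpC, rfl⟩, rfl⟩, ⟨⟨_, _⟩, ⟨hqD, rfl⟩, rfl⟩⟩ :=
    nonempty_inter_of_lt_ncard_add_ncard h
  exact ⟨_, hpC, hqD⟩

end

instance : Std.Symm Adj63 where
  symm a b h := by unfold Adj63 at h ⊢; omega

theorem adj63_embLeft {a b : Fin 3 × Fin 3} (h : Adj3 a b) : Adj63 (embLeft a) (embLeft b) := by
  simp only [Adj3, Adj63, embLeft, Fin.ext_iff, Fin.val_castLE] at h ⊢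
  omega

theorem adj63_embRight {a b : Fin 3 × Fin 3} (h : Adj3 a b) :
    Adj63 (embRight a) (embRight b) := by
  simp only [Adj3, Adj63, embRight, Fin.ext_iff, Fin.addNat] at h ⊢
  omega

theorem adj63_embLeft_two_embRight_zero (j : Fin 3) : Adj63 (embLeft (2, j)) (embRight (0, j)) :=
  Or.inr ⟨rfl, Or.inl rfl⟩

/-- Two SD squares attached face to face carry a connected black cluster running from the
left outer column to the right outer column of the combined 6×3 rectangle. -/
theorem SD_squares_attached_connect (B₁ B₂ : Set (Fin 3 × Fin 3))
    (h₁ : SD3 B₁) (h₂ : SD3 B₂) :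
    ∃ C ⊆ embLeft '' B₁ ∪ embRight '' B₂, Connected63 C ∧
      (∃ c ∈ C, c.1 = (0 : Fin 6)) ∧ (∃ c ∈ C, c.1 = (5 : Fin 6)) := by
  obtain ⟨C₁, hC₁B, hconn₁, h₁left, h₁right, -, -⟩ := h₁
  obtain ⟨C₂, hC₂B, hconn₂, h₂left, h₂right, -, -⟩ := h₂
  obtain ⟨j, hj₁, hj₂⟩ : ∃ j, (2, j) ∈ C₁ ∧ (0, j) ∈ C₂ :=
    exists_mem_mem_of_card_lt_ncard_add_ncard <| by
      simp only [Nat.card_eq_fintype_card, Fintype.card_fin]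
      omega
  obtain ⟨p, hpC, hp⟩ := nonempty_of_ncard_ne_zero (by omega : (C₁ ∩ {c | c.1 = 0}).ncard ≠ 0)
  obtain ⟨q, hqC, hq⟩ := nonempty_of_ncard_ne_zero (by omega : (C₂ ∩ {c | c.1 = 2}).ncard ≠ 0)
  refine ⟨embLeft '' C₁ ∪ embRight '' C₂, union_subset_union (image_mono hC₁B) (image_mono hC₂B),
    ?_, ⟨embLeft p, Or.inl (mem_image_of_mem _ hpC), ?_⟩,
    ⟨embRight q, Or.inr (mem_image_of_mem _ hqC), ?_⟩⟩
  · exact IsConnectedBy.union (IsConnectedBy.image (fun _ _ => adj63_embLeft) hconn₁)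
      (IsConnectedBy.image (fun _ _ => adj63_embRight) hconn₂) (mem_image_of_mem _ hj₁)
      (mem_image_of_mem _ hj₂) (adj63_embLeft_two_embRight_zero j)
  · simp [embLeft, show p.1 = 0 from hp]
  · simp [embRight, Fin.addNat, show q.1 = 2 from hq]
end
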